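/- Let $G$ be a group, $k$ a field, and $\rho : G \to GL_2(k)$ a representation. Let $H \leq G$ be a subgroup of index 2 such that $\rho(H)$ is contained in a Borel subgroup $B$ (the upper triangular matrices after conjugation) and $\rho(H)$ contains a nontrivial unipotent element. If $\rho(H)$ is normalized by $\rho(G)$ and the unique $B$-stable line in $k^2$ is the unique line fixed by all unipotent elements of $\rho(H)$, then $\rho(G)$ stabilizes that line; in particular $\rho$ is reducible as a $G$-representation. -/

import Mathlib

/-- A nontrivial unipotent element of `GL₂`. -/
def IsNontrivialUnipotent {k : Type*} [Field k] (u : ((Fin 2 → k) →ₗ[k] (Fin 2 → k))ˣ) : Prop :=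
  (u.val - LinearMap.id) ^ 2 = 0 ∧ u ≠ 1

/-! If `g⁻¹ h g` stabilizes the line `ℓ` for every `h` in `ρ(H)`, then `h` stabilizes `g ℓ`; so `g ℓ`
is a line fixed by the unipotent elements of `ρ(H)`, and uniqueness of such a line forces
`g ℓ = ℓ`. -/

theorem Submodule.map_map_le_of_comp_eq {R M : Type*} [Semiring R] [AddCommMonoid M]
    [Module R M] {f g f' : M →ₗ[R] M} {p : Submodule R M} (hcomm : f ∘ₗ g = g ∘ₗ f')
    (hp : p.map f' ≤ p) : (p.map g).map f ≤ p.map g := by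
  rw [← Submodule.map_comp, hcomm, Submodule.map_comp]
  exact Submodule.map_mono hp

theorem Module.finrank_map_units_val {K V : Type*} [DivisionRing K] [AddCommGroup V]
    [Module K V] (u : (V →ₗ[K] V)ˣ) (p : Submodule K V) :
    Module.finrank K (p.map u.val) = Module.finrank K p :=
  (LinearMap.GeneralLinearGroup.toLinearEquiv u).finrank_map_eq p

theorem mul_eq_mul_of_inv_mul_mul_eq {G : Type*} [Group G] {a b c : G} (h : a⁻¹ * b * a = c) :
    b * a = a * c := by
  rwa [mul_assoc, inv_mul_eq_iff_eq_mul] at h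

theorem stmt_2_general (G k : Type*) [Group G] [Field k]
    (ρ : G →* ((Fin 2 → k) →ₗ[k] (Fin 2 → k))ˣ)
    (H : Subgroup G)
    (ℓ : Submodule k (Fin 2 → k)) (hℓ1 : Module.finrank k ℓ = 1)
    -- ρ(H) is contained in the Borel stabilizing the line ℓ
    (hBorel : ∀ h ∈ H, ℓ.map (ρ h).val ≤ ℓ)
    -- ρ(H) is normalized by ρ(G)
    (hnorm : ∀ g : G, ∀ h ∈ H, ∃ h' ∈ H, ρ g * ρ h * (ρ g)⁻¹ = ρ h')
    -- ℓ, the unique Borel-stable line, is the unique line fixed by all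
    -- unipotent elements of ρ(H)
    (huniq : ∀ ℓ' : Submodule k (Fin 2 → k), Module.finrank k ℓ' = 1 →
      (∀ h ∈ H, IsNontrivialUnipotent (ρ h) → ℓ'.map (ρ h).val ≤ ℓ') → ℓ' = ℓ) :
    ∀ g : G, ℓ.map (ρ g).val = ℓ := by
  intro g
  refine huniq _ ((Module.finrank_map_units_val _ ℓ).trans hℓ1) fun h hH _ => ?_
  obtain ⟨h', hH', hconj⟩ := hnorm g⁻¹ h hH
  have hcomm : ρ h * ρ g = ρ g * ρ h' :=
    mul_eq_mul_of_inv_mul_mul_eq (by simpa only [map_inv, inv_inv] using hconj)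
  exact Submodule.map_map_le_of_comp_eq (congrArg Units.val hcomm) (hBorel h' hH')

theorem stmt_2 (G k : Type*) [Group G] [Field k]
    (ρ : G →* ((Fin 2 → k) →ₗ[k] (Fin 2 → k))ˣ)
    (H : Subgroup G) (hindex : H.index = 2)
    (ℓ : Submodule k (Fin 2 → k)) (hℓ1 : Module.finrank k ℓ = 1)
    -- ρ(H) is contained in the Borel stabilizing the line ℓ
    (hBorel : ∀ h ∈ H, ℓ.map (ρ h).val ≤ ℓ)
    -- ρ(H) contains a nontrivial unipotent element
    (hunip : ∃ h ∈ H, IsNontrivialUnipotent (ρ h))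
    -- ρ(H) is normalized by ρ(G)
    (hnorm : ∀ g : G, ∀ h ∈ H, ∃ h' ∈ H, ρ g * ρ h * (ρ g)⁻¹ = ρ h')
    -- ℓ, the unique Borel-stable line, is the unique line fixed by all
    -- unipotent elements of ρ(H)
    (huniq : ∀ ℓ' : Submodule k (Fin 2 → k), Module.finrank k ℓ' = 1 →
      (∀ h ∈ H, IsNontrivialUnipotent (ρ h) → ℓ'.map (ρ h).val ≤ ℓ') → ℓ' = ℓ) :
    ∀ g : G, ℓ.map (ρ g).val = ℓ :=
  stmt_2_general G k ρ H ℓ hℓ1 hBorel hnorm huniq
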